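/- Let H be a hierarchy on V ∪ {v_*} with root v_0, and let G be any weighted directed graph on V ∪ {v_*}. Then the maximal paraproduct constraint set Ω(G ∪ H) has v_0 as a dominant frequency: for all (j_w) ∈ Ω(G ∪ H) and all v ∈ V \ {v_0}, one has j_v < j_{v_0}. -/
import Mathlib


/-- `IsPath E u v p`: `p` is a directed path of edges of `E` from `u` to `v`. -/
def IsPath {W : Type*} (E : Finset (W × W × ℤ)) : W → W → List (W × W × ℤ) → Prop
  | u, v, [] => u = v
  | u, v, e :: p => e ∈ E ∧ e.1 = u ∧ IsPath E e.2.1 v p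

/-- The total weight of a path. -/
def pathWeight {W : Type*} (p : List (W × W × ℤ)) : ℤ :=
  (p.map fun e => e.2.2).sum

/-- The polytope of a weighted directed graph. -/
def Omega {W : Type*} (E : Finset (W × W × ℤ)) : Set (W → ℤ) :=
  {j | ∀ e ∈ E, j e.1 ≥ j e.2.1 + e.2.2}

lemma path_bound {W : Type*} (E' : Finset (W × W × ℤ)) (j : W → ℤ)
    (hj : ∀ e ∈ E', j e.1 ≥ j e.2.1 + e.2.2) :
    ∀ (q : List (W × W × ℤ)) (u v : W), IsPath E' u v q → j u ≥ j v + pathWeight q := by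
  intro q
  induction q with
  | nil => intro u v h; simp [IsPath] at h; simp [pathWeight, h]
  | cons e t ih =>
    intro u v h
    obtain ⟨he, h1, h2⟩ := h
    subst h1
    have := hj e he
    have := ih e.2.1 v h2
    simp [pathWeight] at *
    omega

/-- If `H` is a hierarchy with root `v₀` and `G` is any weighted directed graph
on the same vertex set, then `v₀` is a dominant frequency of `Ω(G ∪ H)`. -/
theorem union_with_hierarchy_dominant {W : Type*} [Fintype W] [DecidableEq W]
    (vstar v0 : W) (G E' : Finset (W × W × ℤ)) (p : W → List (W × W × ℤ))
    (hstar : ∀ e ∈ E', e.1 ≠ vstar ∧ e.2.1 ≠ vstar)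
    (hpath : ∀ v, v ≠ v0 → v ≠ vstar →
      (p v ≠ [] ∧ IsPath E' v0 v (p v)) ∧
      (∀ q : List (W × W × ℤ), q ≠ [] → IsPath E' v0 v q → q = p v))
    (hpos : ∀ v, v ≠ v0 → v ≠ vstar → 0 < pathWeight (p v)) :
    ∀ j ∈ Omega (G ∪ E'), ∀ v, v ≠ v0 → v ≠ vstar → j v < j v0 := by
  intro j hj v hv0 hvs
  obtain ⟨⟨_, hp⟩, _⟩ := hpath v hv0 hvs
  have hj' : ∀ e ∈ E', j e.1 ≥ j e.2.1 + e.2.2 := fun e he =>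
    hj e (Finset.mem_union_right G he)
  have := path_bound E' j hj' (p v) v0 v hp
  have := hpos v hv0 hvs
  omega
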